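/- Let Y be a real-valued random variable with E[Y²] < ∞ whose cumulative distribution function is continuous and strictly increasing, let τ ∈ (0,1), let Q_Y be the (unique) τ-quantile of Y and ES_Y := E[Y | Y ≥ Q_Y] its τ-expected shortfall. Define the multi-objective loss L^{(Q,ES)}((v,μ), y) := (ρ(y − v), 1{y > v}(y − μ)²) with tick loss ρ(u) := u(τ − 1{u ≤ 0}). Then for all v ∈ R and μ ∈ R, E[L^{(Q,ES)}((Q_Y, ES_Y), Y)] ≤_lex E[L^{(Q,ES)}((v,μ), Y)], where ≤_lex is the lexicographic order on R²: i.e., the true pair (Q_Y, ES_Y) minimizes the R²-valued expected loss with respect to the lexicographic order. -/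

import Mathlib

open MeasureTheory ProbabilityTheory Filter Set

noncomputable section

namespace SNQR

/-- Euclidean norm of a finite real vector. -/
def vnorm {ι : Type*} [Fintype ι] (x : ι → ℝ) : ℝ := Real.sqrt (∑ i, x i ^ 2)

/-- Frobenius (Euclidean) norm of a matrix. -/
def mnorm {ι κ : Type*} [Fintype ι] [Fintype κ] (M : Matrix ι κ ℝ) : ℝ :=
  Real.sqrt (∑ i, ∑ j, M i j ^ 2)

/-- Euclidean dot product. -/
def dotp {ι : Type*} [Fintype ι] (x y : ι → ℝ) : ℝ := ∑ i, x i * y i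

/-- The tick (pinball) loss `ρ(u) = u (τ - 1{u ≤ 0})`. -/
def tick (τ u : ℝ) : ℝ := u * (τ - if u ≤ 0 then 1 else 0)

/-- The quantile generalized error function `ψ(u) = τ - 1{u ≤ 0}`. -/
def psi (τ u : ℝ) : ℝ := τ - if u ≤ 0 then 1 else 0

/-- A function `f : ℝ → E` is càdlàg on `[a,b]`: right-continuous on `[a,b)` and
with left limits on `(a,b]`. -/
def CadlagOn {E : Type*} [TopologicalSpace E] (f : ℝ → E) (a b : ℝ) : Prop :=
  (∀ t ∈ Set.Ico a b, Filter.Tendsto f (nhdsWithin t (Set.Ici t)) (nhds (f t))) ∧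
  (∀ t ∈ Set.Ioc a b, ∃ L, Filter.Tendsto f (nhdsWithin t (Set.Iio t)) (nhds L))

/-- The Skorohod distance between two `ℝ^ι`-valued paths on `[a,b]`:
the infimum over continuous strictly increasing time changes `λ` of `[a,b]` fixing the
endpoints of the maximum of `‖λ - id‖∞` and `‖f ∘ λ - g‖∞`. -/
def skorohodDist {ι : Type*} [Fintype ι] (a b : ℝ) (f g : ℝ → ι → ℝ) : ℝ :=
  sInf { r : ℝ | 0 ≤ r ∧ ∃ lam : ℝ → ℝ,
    ContinuousOn lam (Set.Icc a b) ∧ StrictMonoOn lam (Set.Icc a b) ∧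
    lam a = a ∧ lam b = b ∧
    ∀ t ∈ Set.Icc a b, |lam t - t| ≤ r ∧ vnorm (f (lam t) - g t) ≤ r }

/-- Convergence in distribution in the Skorohod space `D_ι[a,b]` of a sequence of
`ℝ^ι`-valued processes (defined on a probability space `(Ω, P)`) to a limiting process
(defined on a possibly different probability space `(Ω', P')`), characterized through
bounded Lipschitz (w.r.t. the Skorohod distance) test functionals. -/
def TendstoInDistD {ι : Type*} [Fintype ι] {Ω Ω' : Type*}
    [MeasurableSpace Ω] [MeasurableSpace Ω'] (a b : ℝ) (P : Measure Ω) (P' : Measure Ω')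
    (Xn : ℕ → Ω → ℝ → ι → ℝ) (X : Ω' → ℝ → ι → ℝ) : Prop :=
  ∀ (F : (ℝ → ι → ℝ) → ℝ) (M L : ℝ),
    (∀ f, |F f| ≤ M) →
    (∀ f g, |F f - F g| ≤ L * skorohodDist a b f g) →
    Filter.Tendsto (fun n => ∫ ω, F (Xn n ω) ∂P) Filter.atTop
      (nhds (∫ ω, F (X ω) ∂P'))

/-- Convergence in distribution of real-valued random variables, characterized through
bounded Lipschitz test functions. -/
def TendstoInDistR {Ω Ω' : Type*} [MeasurableSpace Ω] [MeasurableSpace Ω']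
    (P : Measure Ω) (P' : Measure Ω') (Tn : ℕ → Ω → ℝ) (T : Ω' → ℝ) : Prop :=
  ∀ (F : ℝ → ℝ) (M L : ℝ),
    (∀ x, |F x| ≤ M) →
    (∀ x y, |F x - F y| ≤ L * |x - y|) →
    Filter.Tendsto (fun n => ∫ ω, F (Tn n ω) ∂P) Filter.atTop
      (nhds (∫ ω, F (T ω) ∂P'))

/-- `W` is a `ι`-variate standard Brownian motion on `[0,∞)` under `P`:
it starts at `0`, has a.s. continuous paths, its scalar increments over disjoint time
intervals and across components are jointly independent, and each scalar increment
`W t i - W s i` is `N(0, t - s)` distributed. -/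
def IsStdBM {ι Ω' : Type*} [Fintype ι] [MeasurableSpace Ω'] (P : Measure Ω')
    (W : ℝ → Ω' → ι → ℝ) : Prop :=
  (∀ᵐ ω ∂P, W 0 ω = 0) ∧
  (∀ᵐ ω ∂P, Continuous fun t => W t ω) ∧
  (∀ t : ℝ, Measurable fun ω => W t ω) ∧
  (∀ (m : ℕ) (t : Fin (m + 1) → ℝ), (∀ j, 0 ≤ t j) → Monotone t →
    ProbabilityTheory.iIndepFun
      (fun p : Fin m × ι => fun ω => W (t p.1.succ) ω p.2 - W (t p.1.castSucc) ω p.2) P) ∧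
  (∀ s t : ℝ, 0 ≤ s → s ≤ t → ∀ i,
    P.map (fun ω => W t ω i - W s ω i) = gaussianReal 0 (Real.toNNReal (t - s)))

/-- The σ-algebra generated by the random variables `Z t`, `t ∈ S`. -/
def sigmaSeg {Ω E : Type*} [MeasurableSpace E] (Z : ℕ → Ω → E) (S : Set ℕ) :
    MeasurableSpace Ω :=
  ⨆ t ∈ S, MeasurableSpace.comap (Z t) inferInstance

/-- The α-mixing coefficient `α(m)` of the sequence `Z`. -/
def alphaMix {Ω E : Type*} [MeasurableSpace Ω] [MeasurableSpace E] (P : Measure Ω)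
    (Z : ℕ → Ω → E) (m : ℕ) : ℝ :=
  sSup { x : ℝ | ∃ (j : ℕ) (A B : Set Ω),
    MeasurableSet[sigmaSeg Z (Set.Icc 1 j)] A ∧
    MeasurableSet[sigmaSeg Z (Set.Ici (j + m))] B ∧
    x = |(P (A ∩ B)).toReal - (P A).toReal * (P B).toReal| }

/-- The sequence `Z` is α-mixing with mixing coefficients of size `-q`, i.e.
`α(m) = O(m^{-φ})` for some `φ > q`. -/
def AlphaMixingOfSize {Ω E : Type*} [MeasurableSpace Ω] [MeasurableSpace E]
    (P : Measure Ω) (Z : ℕ → Ω → E) (q : ℝ) : Prop :=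
  ∃ φ : ℝ, q < φ ∧ ∃ C : ℝ, ∀ m : ℕ, 1 ≤ m → alphaMix P Z m ≤ C * (m : ℝ) ^ (-φ)

end SNQR

/-!
The tick loss `ρ` is convex with subgradient `ψ`, so
`E ρ(Y - v) = E ρ(Y - Q) + E ψ(Y - Q) · (Q - v) + E[gap]` with a pointwise nonnegative gap.
At the quantile `E ψ(Y - Q) = τ - F(Q) = 0`, and the gap is positive wherever `Y` lies strictly
between `v` and `Q`, an event of positive probability when `F` is strictly increasing. Hence the
first component is minimized exactly at `v = Q`. For `v = Q` the second component is the squared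
loss on `{Y > Q}`, minimized by the mean of `Y` on that event; since `F` is continuous,
`{Y = Q}` is null and this mean is `ES_Y`.
-/

section RandomVariable

variable {Ω : Type*} [MeasurableSpace Ω] {P : Measure Ω} {Y : Ω → ℝ}

theorem integral_ite_eq_setIntegral {E : Type*} [NormedAddCommGroup E] [NormedSpace ℝ E]
    {p : Ω → Prop} [DecidablePred p] (hp : MeasurableSet {ω | p ω}) (g : Ω → E) :
    ∫ ω, (if p ω then g ω else 0) ∂P = ∫ ω in {ω | p ω}, g ω ∂P := by
  rw [← integral_indicator hp]
  simp only [indicator_apply, mem_ofPred_eq]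

theorem cdf_map_apply [IsProbabilityMeasure P] (hY : Measurable Y) (y : ℝ) :
    cdf (P.map Y) y = P.real {ω | Y ω ≤ y} := by
  have : IsProbabilityMeasure (P.map Y) := Measure.isProbabilityMeasure_map hY.aemeasurable
  rw [cdf_eq_real, map_measureReal_apply hY measurableSet_Iic]
  rfl

theorem ae_ne_of_continuous_cdf [IsProbabilityMeasure P] (hY : Measurable Y)
    (hF : Continuous fun y => P.real {ω | Y ω ≤ y}) (q : ℝ) : ∀ᵐ ω ∂P, Y ω ≠ q := by
  have : IsProbabilityMeasure (P.map Y) := Measure.isProbabilityMeasure_map hY.aemeasurable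
  have hcont : Continuous (cdf (P.map Y)) := by
    simpa only [funext (cdf_map_apply hY)] using hF
  have hatom : P.map Y {q} = 0 := by
    rw [← measure_cdf (P.map Y), StieltjesFunction.measure_singleton,
      hcont.continuousWithinAt.leftLim_eq, sub_self, ENNReal.ofReal_zero]
  rw [Measure.map_apply hY (measurableSet_singleton q)] at hatom
  exact measure_eq_zero_iff_ae_notMem.1 hatom

theorem setOf_le_ae_eq_setOf_lt {q : ℝ} (h : ∀ᵐ ω ∂P, Y ω ≠ q) :
    {ω | q ≤ Y ω} =ᵐ[P] {ω | q < Y ω} := by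
  filter_upwards [h] with ω hω
  exact propext ⟨fun hle => hle.lt_of_ne' hω, le_of_lt⟩

theorem measure_Ioc_pos_of_strictMono_cdf [IsProbabilityMeasure P] (hY : Measurable Y)
    (hF : StrictMono fun y => P.real {ω | Y ω ≤ y}) {a b : ℝ} (hab : a < b) :
    0 < P (Y ⁻¹' Ioc a b) := by
  have : IsProbabilityMeasure (P.map Y) := Measure.isProbabilityMeasure_map hY.aemeasurable
  rw [← Measure.map_apply hY measurableSet_Ioc, ← measure_cdf (P.map Y),
    StieltjesFunction.measure_Ioc, ENNReal.ofReal_pos, sub_pos, cdf_map_apply hY,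
    cdf_map_apply hY]
  exact hF hab

end RandomVariable

theorem integral_sq_sub_average_le {α : Type*} [MeasurableSpace α] {μ : Measure α}
    [IsFiniteMeasure μ] {f : α → ℝ} (hf : MemLp f 2 μ) (c : ℝ) :
    ∫ x, (f x - ⨍ y, f y ∂μ) ^ 2 ∂μ ≤ ∫ x, (f x - c) ^ 2 ∂μ := by
  set a := ⨍ y, f y ∂μ
  have hsq : Integrable (fun x => (f x - a) ^ 2) μ := (hf.sub (memLp_const a)).integrable_sq
  have hlin : Integrable (fun x => 2 * (a - c) * (f x - a)) μ :=
    ((hf.integrable one_le_two).sub (integrable_const a)).const_mul _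
  have hexpand : ∫ x, (f x - c) ^ 2 ∂μ = ∫ x, (f x - a) ^ 2 ∂μ + μ.real univ * (a - c) ^ 2 := by
    have h : ∀ x, (f x - c) ^ 2 = (f x - a) ^ 2 + 2 * (a - c) * (f x - a) + (a - c) ^ 2 :=
      fun x => by ring
    simp only [h]
    rw [integral_add _ (integrable_const _), integral_add hsq hlin,
      integral_const_mul, integral_sub_average, mul_zero, add_zero, integral_const, smul_eq_mul]
    exact hsq.add hlin
  rw [hexpand]
  exact le_add_of_nonneg_right (by positivity)

namespace SNQR

def tickGap (u w : ℝ) : ℝ := w * ((if u ≤ 0 then 1 else 0) - (if w ≤ 0 then 1 else 0))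

theorem tick_eq_add_psi_mul_add_tickGap (τ u w : ℝ) :
    tick τ w = tick τ u + psi τ u * (w - u) + tickGap u w := by
  simp only [tick, psi, tickGap]
  split_ifs <;> ring

theorem tickGap_nonneg (u w : ℝ) : 0 ≤ tickGap u w := by
  unfold tickGap
  split_ifs <;> nlinarith

theorem tickGap_pos_of_mul_neg {u w : ℝ} (h : u * w < 0) : 0 < tickGap u w := by
  rcases mul_neg_iff.1 h with ⟨hu, hw⟩ | ⟨hu, hw⟩
  · rw [tickGap, if_neg hu.not_ge, if_pos hw.le]
    linarith
  · rw [tickGap, if_pos hu.le, if_neg hw.not_ge]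
    linarith

theorem abs_psi_le (τ u : ℝ) : |psi τ u| ≤ |τ| + 1 := by
  unfold psi
  split_ifs
  · simpa using abs_sub τ 1
  · simp

theorem measurable_psi (τ : ℝ) : Measurable (psi τ) :=
  measurable_const.sub (Measurable.ite measurableSet_Iic measurable_const measurable_const)

section Integrals

variable {Ω : Type*} [MeasurableSpace Ω] {P : Measure Ω} {Y : Ω → ℝ}

theorem integrable_psi_sub [IsFiniteMeasure P] (hY : AEMeasurable Y P) (τ q : ℝ) :
    Integrable (fun ω => psi τ (Y ω - q)) P :=
  .of_bound ((measurable_psi τ).comp_aemeasurable (hY.sub_const q)).aestronglyMeasurable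
    (|τ| + 1) (ae_of_all _ fun ω => abs_psi_le τ (Y ω - q))

theorem integrable_tick_sub [IsFiniteMeasure P] (hY : Integrable Y P) (τ c : ℝ) :
    Integrable (fun ω => tick τ (Y ω - c)) P :=
  (hY.sub (integrable_const c)).mul_bdd
    ((measurable_psi τ).comp_aemeasurable (hY.aemeasurable.sub_const c)).aestronglyMeasurable
    (ae_of_all _ fun ω => abs_psi_le τ (Y ω - c))

theorem integral_psi_sub [IsProbabilityMeasure P] (hY : Measurable Y) (τ q : ℝ) :
    ∫ ω, psi τ (Y ω - q) ∂P = τ - P.real {ω | Y ω ≤ q} := by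
  have hs : MeasurableSet {ω | Y ω ≤ q} := hY measurableSet_Iic
  have hind : (fun ω => if Y ω ≤ q then (1 : ℝ) else 0) = {ω | Y ω ≤ q}.indicator 1 := by
    ext ω
    simp [indicator_apply]
  simp only [psi, sub_nonpos]
  rw [integral_sub (integrable_const τ) (hind ▸ (integrable_const 1).indicator hs), hind,
    integral_indicator_one hs, integral_const, probReal_univ, one_smul]

theorem integrable_tickGap_sub [IsFiniteMeasure P] (hY : Integrable Y P) (q v : ℝ) :
    Integrable (fun ω => tickGap (Y ω - q) (Y ω - v)) P := by
  have h := ((integrable_tick_sub hY 0 v).sub (integrable_tick_sub hY 0 q)).sub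
    ((integrable_psi_sub hY.aemeasurable 0 q).mul_const (q - v))
  refine h.congr (ae_of_all _ fun ω => ?_)
  simp only [Pi.sub_apply, tick_eq_add_psi_mul_add_tickGap 0 (Y ω - q) (Y ω - v)]
  ring

theorem integral_tick_sub_eq [IsProbabilityMeasure P] (hY : Measurable Y) (hYi : Integrable Y P)
    (τ q v : ℝ) :
    ∫ ω, tick τ (Y ω - v) ∂P = ∫ ω, tick τ (Y ω - q) ∂P
      + (τ - P.real {ω | Y ω ≤ q}) * (q - v) + ∫ ω, tickGap (Y ω - q) (Y ω - v) ∂P := by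
  have h : ∀ ω, tick τ (Y ω - v) = tick τ (Y ω - q) + psi τ (Y ω - q) * (q - v)
      + tickGap (Y ω - q) (Y ω - v) := fun ω => by
    rw [tick_eq_add_psi_mul_add_tickGap τ (Y ω - q), sub_sub_sub_cancel_left]
  simp only [h]
  rw [integral_add _ (integrable_tickGap_sub hYi q v), integral_add (integrable_tick_sub hYi τ q),
    integral_mul_const, integral_psi_sub hY]
  · exact (integrable_psi_sub hY.aemeasurable τ q).mul_const _
  · exact (integrable_tick_sub hYi τ q).add ((integrable_psi_sub hY.aemeasurable τ q).mul_const _)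

theorem integral_tickGap_sub_pos [IsProbabilityMeasure P] (hY : Measurable Y)
    (hYi : Integrable Y P) (hF : StrictMono fun y => P.real {ω | Y ω ≤ y}) {q v : ℝ}
    (hqv : q ≠ v) : 0 < ∫ ω, tickGap (Y ω - q) (Y ω - v) ∂P := by
  rw [integral_pos_iff_support_of_nonneg (fun ω => tickGap_nonneg _ _)
    (integrable_tickGap_sub hYi q v)]
  have hlt : min q v < (min q v + max q v) / 2 := by
    linarith [min_lt_max.2 hqv]
  refine (measure_Ioc_pos_of_strictMono_cdf hY hF hlt).trans_le (measure_mono ?_)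
  rintro ω ⟨hlo, hhi⟩
  refine (tickGap_pos_of_mul_neg ?_).ne'
  rcases le_total q v with h | h
  · simp only [min_eq_left h, max_eq_right h] at hlo hhi
    nlinarith
  · simp only [min_eq_right h, max_eq_left h] at hlo hhi
    nlinarith

theorem integral_tick_sub_lt_of_strictMono_cdf [IsProbabilityMeasure P] (hY : Measurable Y)
    (hYi : Integrable Y P) (hF : StrictMono fun y => P.real {ω | Y ω ≤ y}) {τ q v : ℝ}
    (hq : P.real {ω | Y ω ≤ q} = τ) (hqv : q ≠ v) :
    ∫ ω, tick τ (Y ω - q) ∂P < ∫ ω, tick τ (Y ω - v) ∂P := by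
  rw [integral_tick_sub_eq hY hYi τ q v, hq, sub_self, zero_mul, add_zero]
  linarith [integral_tickGap_sub_pos hY hYi hF hqv]

end Integrals

end SNQR

open SNQR Matrix in
theorem quantile_es_multiobjective_elicitable_general
    {Ω : Type*} [MeasurableSpace Ω] (P : Measure Ω) [IsProbabilityMeasure P]
    (Y : Ω → ℝ) (hYmeas : Measurable Y) (hY2 : MemLp Y 2 P)
    (τ : ℝ)
    -- the CDF of `Y` is continuous and strictly increasing
    (hFcont : Continuous fun y : ℝ => (P {ω | Y ω ≤ y}).toReal)
    (hFstrict : StrictMono fun y : ℝ => (P {ω | Y ω ≤ y}).toReal)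
    -- the (unique) `τ`-quantile of `Y`
    (QY : ℝ) (hQY : (P {ω | Y ω ≤ QY}).toReal = τ)
    -- the `τ`-expected shortfall `ES_Y = E[Y | Y ≥ Q_Y]`
    (ESY : ℝ)
    (hESY : ESY = (∫ ω, (if QY ≤ Y ω then Y ω else 0) ∂P) /
      (P {ω | QY ≤ Y ω}).toReal) :
    ∀ v μ : ℝ,
      (∫ ω, tick τ (Y ω - QY) ∂P) < (∫ ω, tick τ (Y ω - v) ∂P) ∨
      ((∫ ω, tick τ (Y ω - QY) ∂P) = (∫ ω, tick τ (Y ω - v) ∂P) ∧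
        (∫ ω, (if QY < Y ω then (Y ω - ESY) ^ 2 else 0) ∂P) ≤
        (∫ ω, (if v < Y ω then (Y ω - μ) ^ 2 else 0) ∂P)) := by
  intro v μ
  obtain rfl | hQv := eq_or_ne QY v
  · refine Or.inr ⟨rfl, ?_⟩
    have hlt : MeasurableSet {ω | QY < Y ω} := measurableSet_lt measurable_const hYmeas
    have hae := setOf_le_ae_eq_setOf_lt (ae_ne_of_continuous_cdf hYmeas hFcont QY)
    have hES : ESY = ⨍ ω in {ω | QY < Y ω}, Y ω ∂P := by
      rw [hESY, integral_ite_eq_setIntegral (measurableSet_le measurable_const hYmeas),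
        setIntegral_congr_set hae, ← measureReal_def, measureReal_congr hae, setAverage_eq,
        smul_eq_mul, div_eq_inv_mul]
    rw [integral_ite_eq_setIntegral hlt, integral_ite_eq_setIntegral hlt, hES]
    exact integral_sq_sub_average_le (hY2.restrict _) μ
  · exact Or.inl (integral_tick_sub_lt_of_strictMono_cdf hYmeas (hY2.integrable one_le_two)
      hFstrict hQY hQv)

open SNQR Matrix in
/-- **Multi-objective elicitability of the (quantile, expected shortfall) pair.**
With the multi-objective loss `L((v,μ), y) = (ρ(y - v), 1{y > v}(y - μ)²)`, the true pair
`(Q_Y, ES_Y)` minimizes the `ℝ²`-valued expected loss with respect to the lexicographic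
order on `ℝ²`. -/
theorem quantile_es_multiobjective_elicitable
    {Ω : Type*} [MeasurableSpace Ω] (P : Measure Ω) [IsProbabilityMeasure P]
    (Y : Ω → ℝ) (hYmeas : Measurable Y) (hY2 : MemLp Y 2 P)
    (τ : ℝ) (hτ : τ ∈ Set.Ioo (0 : ℝ) 1)
    -- the CDF of `Y` is continuous and strictly increasing
    (hFcont : Continuous fun y : ℝ => (P {ω | Y ω ≤ y}).toReal)
    (hFstrict : StrictMono fun y : ℝ => (P {ω | Y ω ≤ y}).toReal)
    -- the (unique) `τ`-quantile of `Y`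
    (QY : ℝ) (hQY : (P {ω | Y ω ≤ QY}).toReal = τ)
    -- the `τ`-expected shortfall `ES_Y = E[Y | Y ≥ Q_Y]`
    (ESY : ℝ)
    (hESY : ESY = (∫ ω, (if QY ≤ Y ω then Y ω else 0) ∂P) /
      (P {ω | QY ≤ Y ω}).toReal) :
    ∀ v μ : ℝ,
      (∫ ω, tick τ (Y ω - QY) ∂P) < (∫ ω, tick τ (Y ω - v) ∂P) ∨
      ((∫ ω, tick τ (Y ω - QY) ∂P) = (∫ ω, tick τ (Y ω - v) ∂P) ∧
        (∫ ω, (if QY < Y ω then (Y ω - ESY) ^ 2 else 0) ∂P) ≤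
        (∫ ω, (if v < Y ω then (Y ω - μ) ^ 2 else 0) ∂P)) :=
  quantile_es_multiobjective_elicitable_general P Y hYmeas hY2 τ hFcont hFstrict QY hQY ESY hESY
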